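/- The complete bipartite graph K_{3,3} satisfies mad(K_{3,3}) = 3 and lc(K_{3,3}) = 5 > ⌈Δ(K_{3,3})/2⌉ + 2 = ⌈3/2⌉ + 2 = 4. -/

import Mathlib

open SimpleGraph Finset

/-- The subgraph of `G` induced by the union of the two color classes `a` and `b`
of the coloring `c` (as a spanning subgraph of `G`). -/
def pairGraph {V α : Type*} (G : SimpleGraph V) (c : V → α) (a b : α) : SimpleGraph V where
  Adj x y := G.Adj x y ∧ (c x = a ∨ c x = b) ∧ (c y = a ∨ c y = b)
  symm := ⟨fun x y h => ⟨h.1.symm, h.2.2, h.2.1⟩⟩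
  loopless := ⟨fun x h => G.loopless.irrefl x h.1⟩

/-- A graph has maximum degree at most two:  no vertex has three distinct neighbors. -/
def MaxDegLE2 {V : Type*} (H : SimpleGraph V) : Prop :=
  ∀ v x y z : V, H.Adj v x → H.Adj v y → H.Adj v z → x = y ∨ x = z ∨ y = z

/-- `c` is a linear coloring of `G`: a proper coloring in which the union of any
two color classes induces a linear forest (an acyclic graph of maximum degree at most two,
i.e. a disjoint union of paths). -/
def IsLinearColoring {V α : Type*} (G : SimpleGraph V) (c : V → α) : Prop :=
  (∀ ⦃x y⦄, G.Adj x y → c x ≠ c y) ∧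
  ∀ a b : α, (pairGraph G c a b).IsAcyclic ∧ MaxDegLE2 (pairGraph G c a b)

/-- The linear chromatic number `lc(G)`. -/
noncomputable def linChromNum {V : Type*} (G : SimpleGraph V) : ℕ :=
  sInf {n : ℕ | ∃ c : V → Fin n, IsLinearColoring G c}

/-- `G` is linearly `k`-choosable: from any lists of size at least `k` one can choose
a linear coloring. -/
def LinChoosable {V : Type*} (G : SimpleGraph V) (k : ℕ) : Prop :=
  ∀ L : V → Finset ℕ, (∀ v, k ≤ (L v).card) →
    ∃ c : V → ℕ, (∀ v, c v ∈ L v) ∧ IsLinearColoring G c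

/-- The linear list chromatic number `lc_ℓ(G)`. -/
noncomputable def linListChromNum {V : Type*} (G : SimpleGraph V) : ℕ :=
  sInf {k : ℕ | LinChoosable G k}

/-- `mad(G) ≤ q`: every nonempty subgraph has average degree at most `q`. -/
def MadLE {V : Type*} [Fintype V] (G : SimpleGraph V) (q : ℚ) : Prop :=
  ∀ H : G.Subgraph, H.verts.Nonempty →
    2 * (H.edgeSet.ncard : ℚ) ≤ q * (H.verts.ncard : ℚ)

/-- `mad(G) < q`: every nonempty subgraph has average degree less than `q`. -/
def MadLT {V : Type*} [Fintype V] (G : SimpleGraph V) (q : ℚ) : Prop :=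
  ∀ H : G.Subgraph, H.verts.Nonempty →
    2 * (H.edgeSet.ncard : ℚ) < q * (H.verts.ncard : ℚ)

/-- `mad(G) ≥ q`: some nonempty subgraph has average degree at least `q`. -/
def MadGE {V : Type*} [Fintype V] (G : SimpleGraph V) (q : ℚ) : Prop :=
  ∃ H : G.Subgraph, H.verts.Nonempty ∧ q * (H.verts.ncard : ℚ) ≤ 2 * (H.edgeSet.ncard : ℚ)

/-- `mad(G) = q`: the maximum average degree over nonempty subgraphs equals `q`. -/
def MadEq {V : Type*} [Fintype V] (G : SimpleGraph V) (q : ℚ) : Prop :=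
  MadLE G q ∧ ∃ H : G.Subgraph, H.verts.Nonempty ∧
    2 * (H.edgeSet.ncard : ℚ) = q * (H.verts.ncard : ℚ)

/-- `H` is a minor of `G`. -/
def IsMinorOf {W V : Type*} (H : SimpleGraph W) (G : SimpleGraph V) : Prop :=
  ∃ f : V → Option W,
    (∀ w : W, ∃ v : V, f v = some w) ∧
    (∀ w : W, (G.induce {v | f v = some w}).Connected) ∧
    (∀ w₁ w₂ : W, H.Adj w₁ w₂ →
      ∃ v₁ v₂ : V, f v₁ = some w₁ ∧ f v₂ = some w₂ ∧ G.Adj v₁ v₂)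

/-- Planarity, via Wagner's theorem: no `K₅` minor and no `K_{3,3}` minor. -/
def IsPlanar {V : Type*} (G : SimpleGraph V) : Prop :=
  ¬ IsMinorOf (⊤ : SimpleGraph (Fin 5)) G ∧
  ¬ IsMinorOf (completeBipartiteGraph (Fin 3) (Fin 3)) G

noncomputable instance : DecidableRel (completeBipartiteGraph (Fin 3) (Fin 3)).Adj :=
  Classical.decRel _

section Aux
variable {W : Type*} [DecidableEq W]

lemma acyclic_of_edges_subset (H : SimpleGraph W) (s : Finset (Sym2 W)) (hcard : s.card ≤ 2)
    (h : ∀ ⦃x y⦄, H.Adj x y → s(x, y) ∈ s) : H.IsAcyclic := by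
  intro v p hp
  have h1 : p.edges.toFinset ⊆ s := by
    intro e he
    have he' := p.edges_subset_edgeSet (List.mem_toFinset.mp he)
    induction e using Sym2.ind with
    | _ x y => exact h he'
  have h2 := List.toFinset_card_of_nodup hp.edges_nodup
  have h3 := hp.three_le_length
  have h4 := Finset.card_le_card h1
  rw [h2, p.length_edges] at h4
  omega

lemma maxdeg_of_edges_subset (H : SimpleGraph W) (s : Finset (Sym2 W)) (hcard : s.card ≤ 2)
    (h : ∀ ⦃x y⦄, H.Adj x y → s(x, y) ∈ s) : MaxDegLE2 H := by
  intro v x y z hx hy hz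
  by_contra hc
  push_neg at hc
  obtain ⟨h1, h2, h3⟩ := hc
  have e1 : s(v, x) ≠ s(v, y) := fun he => h1 (Sym2.congr_right.mp he)
  have e2 : s(v, x) ≠ s(v, z) := fun he => h2 (Sym2.congr_right.mp he)
  have e3 : s(v, y) ≠ s(v, z) := fun he => h3 (Sym2.congr_right.mp he)
  have hsub : ({s(v, x), s(v, y), s(v, z)} : Finset (Sym2 W)) ⊆ s := by
    intro e he
    simp only [Finset.mem_insert, Finset.mem_singleton] at he
    rcases he with rfl | rfl | rfl
    exacts [h hx, h hy, h hz]
  have hc3 : ({s(v, x), s(v, y), s(v, z)} : Finset (Sym2 W)).card = 3 := by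
    rw [Finset.card_insert_of_notMem (by simp [e1, e2]),
        Finset.card_insert_of_notMem (by simp [e3]), Finset.card_singleton]
  have := Finset.card_le_card hsub
  omega

end Aux

abbrev V6 := Fin 3 ⊕ Fin 3
abbrev G33 := completeBipartiteGraph (Fin 3) (Fin 3)

lemma G33_adj_lr (i j : Fin 3) : G33.Adj (.inl i) (.inr j) := by
  simp [completeBipartiteGraph]

def c5 : V6 → Fin 5
  | .inl i => if i.val = 2 then 1 else 0
  | .inr j => ⟨j.val + 2, by omega⟩

def Epair (a b : Fin 5) : Finset (Sym2 V6) :=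
  ((Finset.univ : Finset (Fin 3 × Fin 3)).filter
    (fun p => (c5 (.inl p.1) = a ∨ c5 (.inl p.1) = b) ∧
      (c5 (.inr p.2) = a ∨ c5 (.inr p.2) = b))).image
    (fun p => s(Sum.inl p.1, Sum.inr p.2))

lemma Epair_card (a b : Fin 5) : (Epair a b).card ≤ 2 := by
  refine le_trans Finset.card_image_le ?_
  revert a b; decide

lemma mem_Epair {a b : Fin 5} {x y : V6} (h : (pairGraph G33 c5 a b).Adj x y) :
    s(x, y) ∈ Epair a b := by
  obtain ⟨hadj, hx, hy⟩ := h
  rcases x with i | i <;> rcases y with j | j <;>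
    simp only [completeBipartiteGraph_adj, Sum.isLeft_inl, Sum.isRight_inl, Sum.isLeft_inr,
      Sum.isRight_inr] at hadj
  · simp at hadj
  · exact Finset.mem_image.mpr ⟨(i, j), Finset.mem_filter.mpr ⟨Finset.mem_univ _, hx, hy⟩, rfl⟩
  · rw [Sym2.eq_swap]
    exact Finset.mem_image.mpr ⟨(j, i), Finset.mem_filter.mpr ⟨Finset.mem_univ _, hy, hx⟩, rfl⟩
  · simp at hadj

lemma c5_linear : IsLinearColoring G33 c5 := by
  constructor
  · intro x y hadj
    rcases x with i | i <;> rcases y with j | j <;>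
      simp only [completeBipartiteGraph_adj, Sum.isLeft_inl, Sum.isRight_inl, Sum.isLeft_inr,
        Sum.isRight_inr] at hadj
    · simp at hadj
    · revert i j; decide
    · revert i j; decide
    · simp at hadj
  · intro a b
    exact ⟨acyclic_of_edges_subset _ (Epair a b) (Epair_card a b) fun x y h => mem_Epair h,
      maxdeg_of_edges_subset _ (Epair a b) (Epair_card a b) fun x y h => mem_Epair h⟩

-- lower bound: any linear coloring uses ≥ 5 colors
lemma lc_lower {n : ℕ} (c : V6 → Fin n) (hc : IsLinearColoring G33 c) : 5 ≤ n := by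
  obtain ⟨hproper, hpairs⟩ := hc
  have hAB : ∀ i j : Fin 3, c (.inl i) ≠ c (.inr j) := fun i j => hproper (G33_adj_lr i j)
  -- no color appears on all three vertices of a side
  have hA3 : ¬ (c (.inl 0) = c (.inl 1) ∧ c (.inl 0) = c (.inl 2)) := by
    rintro ⟨h1, h2⟩
    have hm := (hpairs (c (.inl 0)) (c (.inr 0))).2 (.inr 0) (.inl 0) (.inl 1) (.inl 2)
      ⟨(G33_adj_lr 0 0).symm, Or.inr rfl, Or.inl rfl⟩
      ⟨(G33_adj_lr 1 0).symm, Or.inr rfl, Or.inl h1.symm⟩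
      ⟨(G33_adj_lr 2 0).symm, Or.inr rfl, Or.inl h2.symm⟩
    simp at hm
  have hB3 : ¬ (c (.inr 0) = c (.inr 1) ∧ c (.inr 0) = c (.inr 2)) := by
    rintro ⟨h1, h2⟩
    have hm := (hpairs (c (.inl 0)) (c (.inr 0))).2 (.inl 0) (.inr 0) (.inr 1) (.inr 2)
      ⟨G33_adj_lr 0 0, Or.inl rfl, Or.inr rfl⟩
      ⟨G33_adj_lr 0 1, Or.inl rfl, Or.inr h1.symm⟩
      ⟨G33_adj_lr 0 2, Or.inl rfl, Or.inr h2.symm⟩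
    simp at hm
  -- no repeat on both sides simultaneously (4-cycle)
  have hnoboth : ¬ ((∃ i i' : Fin 3, i ≠ i' ∧ c (.inl i) = c (.inl i')) ∧
      (∃ j j' : Fin 3, j ≠ j' ∧ c (.inr j) = c (.inr j'))) := by
    rintro ⟨⟨i, i', hii, hA⟩, ⟨j, j', hjj, hB⟩⟩
    set a := c (.inl i) with ha
    set b := c (.inr j) with hb
    have a1 : (pairGraph G33 c a b).Adj (.inl i) (.inr j) :=
      ⟨G33_adj_lr i j, Or.inl rfl, Or.inr rfl⟩
    have a2 : (pairGraph G33 c a b).Adj (.inr j) (.inl i') :=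
      ⟨(G33_adj_lr i' j).symm, Or.inr rfl, Or.inl hA.symm⟩
    have a3 : (pairGraph G33 c a b).Adj (.inl i') (.inr j') :=
      ⟨G33_adj_lr i' j', Or.inl hA.symm, Or.inr hB.symm⟩
    have a4 : (pairGraph G33 c a b).Adj (.inr j') (.inl i) :=
      ⟨(G33_adj_lr i j').symm, Or.inr hB.symm, Or.inl rfl⟩
    let p : (pairGraph G33 c a b).Walk (.inl i) (.inl i) :=
      .cons a1 (.cons a2 (.cons a3 (.cons a4 .nil)))
    refine (hpairs a b).1 p ?_
    rw [SimpleGraph.Walk.isCycle_def]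
    refine ⟨⟨?_⟩, by simp [p], ?_⟩
    · simp only [p, SimpleGraph.Walk.edges_cons, SimpleGraph.Walk.edges_nil,
        List.nodup_cons, List.mem_cons, List.mem_singleton, List.not_mem_nil,
        List.nodup_nil, and_true, not_or]
      simp [Sym2.eq, Sym2.rel_iff', hii, hjj, hii.symm, hjj.symm]
    · simp only [p, SimpleGraph.Walk.support_cons, SimpleGraph.Walk.support_nil,
        List.tail_cons, List.nodup_cons, List.mem_cons, List.not_mem_nil,
        List.nodup_nil, and_true, not_or, List.mem_singleton]
      refine ⟨⟨by simp, by simp [hjj], by simp⟩, ⟨by simp, by simp [hii.symm]⟩, by simp⟩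
  -- counting
  set TA : Finset (Fin n) := {c (.inl 0), c (.inl 1), c (.inl 2)} with hTA
  set TB : Finset (Fin n) := {c (.inr 0), c (.inr 1), c (.inr 2)} with hTB
  have hmemA : ∀ i : Fin 3, c (.inl i) ∈ TA := by
    intro i; fin_cases i <;> simp [hTA]
  have hmemB : ∀ j : Fin 3, c (.inr j) ∈ TB := by
    intro j; fin_cases j <;> simp [hTB]
  have hdisj : Disjoint TA TB := by
    rw [Finset.disjoint_left]
    intro x hxA hxB
    simp only [hTA, Finset.mem_insert, Finset.mem_singleton] at hxA
    simp only [hTB, Finset.mem_insert, Finset.mem_singleton] at hxB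
    rcases hxA with rfl | rfl | rfl <;> rcases hxB with h | h | h <;>
      exact absurd h (hAB _ _)
  have hA2 : 2 ≤ TA.card := by
    by_contra h
    push_neg at h
    have h1 : TA.card ≤ 1 := by omega
    exact hA3 ⟨Finset.card_le_one.mp h1 _ (hmemA 0) _ (hmemA 1),
      Finset.card_le_one.mp h1 _ (hmemA 0) _ (hmemA 2)⟩
  have hB2 : 2 ≤ TB.card := by
    by_contra h
    push_neg at h
    have h1 : TB.card ≤ 1 := by omega
    exact hB3 ⟨Finset.card_le_one.mp h1 _ (hmemB 0) _ (hmemB 1),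
      Finset.card_le_one.mp h1 _ (hmemB 0) _ (hmemB 2)⟩
  have hrepA : TA.card ≤ 2 → ∃ i i' : Fin 3, i ≠ i' ∧ c (.inl i) = c (.inl i') := by
    intro h
    by_contra hco
    push_neg at hco
    have e1 := hco 0 1 (by decide)
    have e2 := hco 0 2 (by decide)
    have e3 := hco 1 2 (by decide)
    have : TA.card = 3 := by
      rw [hTA, Finset.card_insert_of_notMem (by simp [e1, e2]),
        Finset.card_insert_of_notMem (by simp [e3]), Finset.card_singleton]
    omega
  have hrepB : TB.card ≤ 2 → ∃ j j' : Fin 3, j ≠ j' ∧ c (.inr j) = c (.inr j') := by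
    intro h
    by_contra hco
    push_neg at hco
    have e1 := hco 0 1 (by decide)
    have e2 := hco 0 2 (by decide)
    have e3 := hco 1 2 (by decide)
    have : TB.card = 3 := by
      rw [hTB, Finset.card_insert_of_notMem (by simp [e1, e2]),
        Finset.card_insert_of_notMem (by simp [e3]), Finset.card_singleton]
    omega
  have h5 : 5 ≤ TA.card + TB.card := by
    by_contra h
    push_neg at h
    exact hnoboth ⟨hrepA (by omega), hrepB (by omega)⟩
  have hunion : (TA ∪ TB).card = TA.card + TB.card := Finset.card_union_of_disjoint hdisj
  have hle : (TA ∪ TB).card ≤ n := by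
    have := Finset.card_le_univ (TA ∪ TB)
    simpa using this
  omega

lemma G33_degree (v : V6) : G33.degree v = 3 := by
  classical
  rw [SimpleGraph.degree]
  rcases v with i | j
  · have : G33.neighborFinset (.inl i) = {Sum.inr 0, Sum.inr 1, Sum.inr 2} := by
      ext x
      rw [SimpleGraph.mem_neighborFinset]
      rcases x with a | b
      · simp [completeBipartiteGraph]
      · fin_cases b <;> simp [completeBipartiteGraph]
    rw [this]; decide
  · have : G33.neighborFinset (.inr j) = {Sum.inl 0, Sum.inl 1, Sum.inl 2} := by
      ext x
      rw [SimpleGraph.mem_neighborFinset]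
      rcases x with a | b
      · fin_cases a <;> simp [completeBipartiteGraph]
      · simp [completeBipartiteGraph]
    rw [this]; decide

lemma G33_maxDegree : G33.maxDegree = 3 := by
  refine le_antisymm (SimpleGraph.maxDegree_le_of_forall_degree_le _ _ fun v => le_of_eq (G33_degree v)) ?_
  have := SimpleGraph.degree_le_maxDegree G33 (Sum.inl 0)
  rwa [G33_degree] at this

lemma G33_edge_count : G33.edgeSet.ncard = 9 := by
  classical
  have h := SimpleGraph.sum_degrees_eq_twice_card_edges G33
  have h18 : ∑ v : V6, G33.degree v = 18 := by
    simp [G33_degree]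
  rw [h18] at h
  have hc : G33.edgeFinset.card = G33.edgeSet.ncard := by
    rw [SimpleGraph.edgeFinset_card, ← Nat.card_eq_fintype_card, Nat.card_coe_set_eq]
  omega

lemma subgraph_bound (H : G33.Subgraph) :
    2 * H.edgeSet.ncard ≤ 3 * H.verts.ncard := by
  classical
  haveI : Fintype ↥H.verts := Fintype.ofFinite _
  haveI : DecidableRel H.coe.Adj := Classical.decRel _
  have hdeg : ∀ v : ↥H.verts, H.coe.degree v ≤ 3 := by
    intro v
    haveI : Fintype ↥(H.neighborSet v) := Fintype.ofFinite _
    rw [SimpleGraph.Subgraph.coe_degree]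
    calc H.degree ↑v ≤ G33.degree ↑v := SimpleGraph.Subgraph.degree_le H ↑v
    _ = 3 := G33_degree _
  have h0 := SimpleGraph.sum_degrees_eq_twice_card_edges H.coe
  have h : ∑ v : ↥H.verts, H.coe.degree v = 2 * H.coe.edgeFinset.card := by
    rw [← h0]; exact Finset.sum_congr rfl fun v _ => by congr!
  have hsum : ∑ v : ↥H.verts, H.coe.degree v ≤ 3 * Fintype.card ↥H.verts := by
    calc ∑ v : ↥H.verts, H.coe.degree v ≤ ∑ _v : ↥H.verts, 3 :=
      Finset.sum_le_sum fun v _ => hdeg v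
    _ = 3 * Fintype.card ↥H.verts := by rw [Finset.sum_const, Finset.card_univ]; ring
  have hedge : H.coe.edgeFinset.card = H.edgeSet.ncard := by
    rw [← SimpleGraph.Subgraph.image_coe_edgeSet_coe,
      Set.ncard_image_of_injective _ (Sym2.map.injective Subtype.coe_injective),
      SimpleGraph.edgeFinset_card, ← Nat.card_eq_fintype_card, Nat.card_coe_set_eq]
  have hverts : H.verts.ncard = Fintype.card ↥H.verts := by
    rw [Set.ncard_eq_toFinset_card', Set.toFinset_card]
  calc 2 * H.edgeSet.ncard = 2 * H.coe.edgeFinset.card := by rw [hedge]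
    _ = ∑ v : ↥H.verts, H.coe.degree v := h.symm
    _ ≤ 3 * Fintype.card ↥H.verts := hsum
    _ = 3 * H.verts.ncard := by rw [hverts]

lemma linChromNum_eq : linChromNum G33 = 5 := by
  have h5 : 5 ∈ {n : ℕ | ∃ c : V6 → Fin n, IsLinearColoring G33 c} := ⟨c5, c5_linear⟩
  refine le_antisymm (Nat.sInf_le h5) (le_csInf ⟨5, h5⟩ ?_)
  rintro n ⟨c, hc⟩
  exact lc_lower c hc

/-- `K_{3,3}` satisfies `lc(K_{3,3}) = 5`, which exceeds `⌈Δ(K_{3,3})/2⌉ + 2 = 4`,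
and `mad(K_{3,3}) = 3`. -/
theorem K33_linChromNum_and_mad :
    linChromNum (completeBipartiteGraph (Fin 3) (Fin 3)) = 5 ∧
    ((completeBipartiteGraph (Fin 3) (Fin 3)).maxDegree + 1) / 2 + 2 = 4 ∧
    4 < linChromNum (completeBipartiteGraph (Fin 3) (Fin 3)) ∧
    MadEq (completeBipartiteGraph (Fin 3) (Fin 3)) 3 := by
  refine ⟨linChromNum_eq, by rw [G33_maxDegree], by rw [linChromNum_eq]; omega, ?_, ?_⟩
  · intro H hne
    have := subgraph_bound H
    push_cast
    exact_mod_cast this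
  · refine ⟨⊤, ⟨Sum.inl 0, by simp⟩, ?_⟩
    rw [SimpleGraph.Subgraph.edgeSet_top, SimpleGraph.Subgraph.verts_top, G33_edge_count,
      Set.ncard_univ]
    norm_num
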